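/- arXiv:1908.06517 — 2 statements merged into one kernel-verified Lean document; each statement's English description precedes it below -/
import Mathlib

section
/- Let g(x) be a formal series of the form \(g(x)=\sum_{k=0}^{\infty} g_k \frac{x^k}{(1-x)^{k+1}}\) with \(g_k\in h^k\mathbb{C}[[h]]\) and \(g_0=1\). Then g(x) is a well-defined element of \(\mathbb{C}_*(x)[[h]]\) (h-adically completed localization of \(\mathbb{C}[[x]]\) at nonzero polynomials), i.e. modulo each power \(h^k\) the series g(x) is a rational function of x with only a pole at x = 1, and moreover its multiplicative inverse exists and has the form \(g(x)^{-1} = \sum_{s=0}^{\infty} G_s \frac{x^s}{(1-x)^{s-1}}\) for some \(G_s \in h^s\mathbb{C}[[h]]\). -/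
/-!
With `y = x/(1-x)` one has `x^k/(1-x)^{k+1} = y^k/(1-x)` and `x^s(1-x)^{1-s} = y^s(1-x)`, so
`g(x) = φ(y)/(1-x)` for `φ(t) = Σ g_k t^k`, and the inverse is `ψ(y)(1-x)` with `ψ = φ⁻¹`: since `y`
has no constant term, substituting `t ↦ y` is a ring homomorphism, so the product is `(φψ)(y) = 1`.
The condition `h^k ∣ g_k` says `φ(t) = φ₀(ht)`, and this shape survives inversion.
Modulo `h^k` only the terms `g_j x^j/(1-x)^{j+1}` with `j < k` survive, and multiplying by
`(1-x)^k` turns each of them into the polynomial `g_j x^j (1-x)^{k-1-j}`.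
-/

open PowerSeries

noncomputable section

/-- `ℂ[[h]]`. -/
abbrev Ah : Type := PowerSeries ℂ

/-- `ℂ[[x,h]] = (ℂ[[h]])[[x]]`; outer variable `x`, inner variable `h`. -/
abbrev Rxh : Type := PowerSeries Ah

/-- The geometric series `(1-x)⁻¹ ∈ ℂ[[x,h]]`. -/
def geomInv : Rxh := PowerSeries.invOfUnit (1 - PowerSeries.X) 1

/-- The series `g(x) = Σ_{k≥0} g_k x^k (1-x)^{-(k+1)}`, assembled
coefficientwise in `x`. -/
def gser (g : ℕ → Ah) : Rxh :=
  PowerSeries.mk fun n =>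
    ∑ k ∈ Finset.range (n + 1),
      PowerSeries.coeff (R := Ah) n
        (PowerSeries.C (R := Ah) (g k) * PowerSeries.X ^ k * geomInv ^ (k + 1))

/-- The series `Σ_{s≥0} G_s x^s (1-x)^{1-s}`, assembled coefficientwise. -/
def invser (G : ℕ → Ah) : Rxh :=
  PowerSeries.mk fun n =>
    ∑ s ∈ Finset.range (n + 1),
      PowerSeries.coeff (R := Ah) n
        (PowerSeries.C (R := Ah) (G s) * PowerSeries.X ^ s *
          (if s = 0 then (1 - PowerSeries.X) else geomInv ^ (s - 1)))


open Finset

namespace PowerSeries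

variable {R : Type*} [CommRing R]

theorem sum_range_coeff_eq_of_X_pow_dvd {F : ℕ → R⟦X⟧} (hF : ∀ k, X ^ k ∣ F k) {m N : ℕ}
    (hmN : m ≤ N) :
    ∑ k ∈ range (m + 1), coeff m (F k) = ∑ k ∈ range (N + 1), coeff m (F k) := by
  refine sum_subset (range_subset_range.mpr (by omega)) fun k _ hk => ?_
  exact X_pow_dvd_iff.mp (hF k) m (by simpa using hk)

theorem coeff_mul_mk_sum_coeff {F : ℕ → R⟦X⟧} (hF : ∀ k, X ^ k ∣ F k) (w : R⟦X⟧) (n : ℕ) :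
    coeff n (w * mk fun m => ∑ k ∈ range (m + 1), coeff m (F k)) =
      ∑ k ∈ range (n + 1), coeff n (w * F k) := by
  simp only [coeff_mul, coeff_mk]
  rw [sum_comm]
  refine sum_congr rfl fun p hp => ?_
  have hp2 : p.2 ≤ n := by have := mem_antidiagonal.mp hp; omega
  rw [sum_range_coeff_eq_of_X_pow_dvd hF hp2, mul_sum]

theorem coeff_subst_eq_sum_range {b : R⟦X⟧} (hb : X ∣ b) (f : R⟦X⟧) (n : ℕ) :
    coeff n (f.subst b) = ∑ d ∈ range (n + 1), coeff d f * coeff n (b ^ d) := by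
  have hb0 : constantCoeff b = 0 := X_dvd_iff.mp hb
  rw [coeff_subst' (HasSubst.of_constantCoeff_zero' hb0)]
  refine finsum_eq_finsetSum_of_support_subset _ fun d hd => ?_
  rw [coe_range, Set.mem_Iio, Nat.lt_succ_iff]
  by_contra! hnd
  have hbd : coeff n (b ^ d) = 0 := X_pow_dvd_iff.mp (pow_dvd_pow_of_dvd hb d) n hnd
  exact hd (by simp [hbd])

theorem coeff_X_pow_mul_one_sub_X_pow_of_lt {j e n : ℕ} (h : j + e < n) :
    coeff n ((X : R⟦X⟧) ^ j * (1 - X) ^ e) = 0 := by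
  have hcoe : (X : R⟦X⟧) ^ j * (1 - X) ^ e =
      ((Polynomial.X ^ j * (1 - Polynomial.X) ^ e : Polynomial R) : R⟦X⟧) := by
    simp
  rw [hcoe, Polynomial.coeff_coe]
  refine Polynomial.coeff_eq_zero_of_natDegree_lt (lt_of_le_of_lt ?_ h)
  refine Polynomial.natDegree_mul_le.trans (add_le_add (Polynomial.natDegree_X_pow_le j) ?_)
  refine (Polynomial.natDegree_pow_le_of_le e ?_).trans (mul_one e).le
  exact Polynomial.natDegree_sub_le_of_le (Polynomial.natDegree_one.trans_le zero_le_one)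
    Polynomial.natDegree_X_le

/-- Such series are the rescalings `φ₀(a t)`, and `rescale a` is a ring homomorphism. -/
theorem exists_mul_eq_one_of_pow_dvd_coeff (a : R) {φ : R⟦X⟧} (hφ : ∀ k, a ^ k ∣ coeff k φ)
    (hφ0 : coeff 0 φ = 1) :
    ∃ ψ : R⟦X⟧, (∀ k, a ^ k ∣ coeff k ψ) ∧ coeff 0 ψ = 1 ∧ φ * ψ = 1 := by
  choose φ' hφ' using hφ
  have hφ_eq : φ = rescale a (mk φ') := by
    ext k
    rw [coeff_rescale, coeff_mk, hφ']
  have hφ'0 : constantCoeff (mk φ') = ↑(1 : Rˣ) := by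
    simpa [hφ'] using hφ0
  refine ⟨rescale a (invOfUnit (mk φ') 1), fun k => ?_, ?_, ?_⟩
  · rw [coeff_rescale]
    exact dvd_mul_right _ _
  · simp
  · rw [hφ_eq, ← map_mul, mul_invOfUnit _ _ hφ'0, map_one]

end PowerSeries

theorem one_sub_X_mul_geomInv : (1 - X : Rxh) * geomInv = 1 :=
  mul_invOfUnit _ _ (by simp)

def xDivOneSubX : Rxh := X * geomInv

theorem X_dvd_xDivOneSubX : X ∣ xDivOneSubX := dvd_mul_right _ _

theorem one_sub_X_mul_gser (g : ℕ → Ah) :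
    (1 - X) * gser g = (mk g).subst xDivOneSubX := by
  have hF (k : ℕ) : X ^ k ∣ C (g k) * X ^ k * geomInv ^ (k + 1) := (dvd_mul_left _ _).mul_right _
  ext1 n
  rw [gser, coeff_mul_mk_sum_coeff hF, coeff_subst_eq_sum_range X_dvd_xDivOneSubX]
  refine sum_congr rfl fun k _ => ?_
  have hterm : (1 - X) * (C (g k) * X ^ k * geomInv ^ (k + 1)) =
      C (g k) * xDivOneSubX ^ k := by
    rw [xDivOneSubX]
    linear_combination (C (g k) * X ^ k * geomInv ^ k) * one_sub_X_mul_geomInv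
  rw [hterm, coeff_C_mul, coeff_mk]

theorem geomInv_mul_invser (G : ℕ → Ah) :
    geomInv * invser G = (mk G).subst xDivOneSubX := by
  have hF (s : ℕ) : X ^ s ∣ C (G s) * X ^ s * if s = 0 then 1 - X else geomInv ^ (s - 1) :=
    (dvd_mul_left _ _).mul_right _
  ext1 n
  rw [invser, coeff_mul_mk_sum_coeff hF, coeff_subst_eq_sum_range X_dvd_xDivOneSubX]
  refine sum_congr rfl fun s _ => ?_
  have hterm : geomInv * (C (G s) * X ^ s * if s = 0 then 1 - X else geomInv ^ (s - 1)) =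
      C (G s) * xDivOneSubX ^ s := by
    rw [xDivOneSubX]
    rcases s with _ | s
    · rw [if_pos rfl]
      linear_combination C (G 0) * one_sub_X_mul_geomInv
    · simp only [add_tsub_cancel_right, if_neg (Nat.succ_ne_zero s)]
      ring
  rw [hterm, coeff_C_mul, coeff_mk]

theorem gser_mul_invser {g G : ℕ → Ah} (h : mk g * mk G = 1) : gser g * invser G = 1 := by
  have hsubst := HasSubst.of_constantCoeff_zero' (X_dvd_iff.mp X_dvd_xDivOneSubX)
  calc gser g * invser G = ((1 - X) * gser g) * (geomInv * invser G) := by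
        linear_combination (gser g * invser G) * one_sub_X_mul_geomInv.symm
    _ = (mk g * mk G).subst xDivOneSubX := by
        rw [one_sub_X_mul_gser, geomInv_mul_invser, subst_mul hsubst]
    _ = 1 := by rw [h, ← coe_substAlgHom hsubst, map_one]

theorem pow_dvd_coeff_one_sub_X_pow_mul_gser {g : ℕ → Ah} (hg : ∀ k, (X : Ah) ^ k ∣ g k)
    {k n : ℕ} (hkn : k < n) :
    (X : Ah) ^ k ∣ coeff n ((1 - X) ^ k * gser g) := by
  have hF (j : ℕ) : X ^ j ∣ C (g j) * X ^ j * geomInv ^ (j + 1) := (dvd_mul_left _ _).mul_right _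
  rw [gser, coeff_mul_mk_sum_coeff hF]
  refine dvd_sum fun j _ => ?_
  rw [show (1 - X) ^ k * (C (g j) * X ^ j * geomInv ^ (j + 1)) =
      C (g j) * ((1 - X) ^ k * X ^ j * geomInv ^ (j + 1)) by ring, coeff_C_mul]
  rcases lt_or_ge j k with hjk | hkj
  · obtain ⟨e, rfl⟩ := Nat.exists_eq_add_of_lt hjk
    have hpoly : (1 - X : Rxh) ^ (j + e + 1) * X ^ j * geomInv ^ (j + 1) =
        X ^ j * (1 - X) ^ e * ((1 - X) * geomInv) ^ (j + 1) := by
      rw [mul_pow]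
      ring
    rw [one_sub_X_mul_geomInv, one_pow, mul_one] at hpoly
    rw [hpoly, coeff_X_pow_mul_one_sub_X_pow_of_lt (by omega), mul_zero]
    exact dvd_zero _
  · exact ((pow_dvd_pow _ hkj).trans (hg j)).mul_right _

theorem gser_rational_mod_h_and_inv (g : ℕ → Ah)
    (hg : ∀ k, (PowerSeries.X : Ah) ^ k ∣ g k) (hg0 : g 0 = 1) :
    -- modulo `h^k`, the series `g(x)` is rational with only a pole at `x = 1`:
    -- some power `(1-x)^m` clears it to a polynomial in `x` modulo `h^k`
    (∀ k : ℕ, ∃ m d : ℕ, ∀ n : ℕ, d < n →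
        (PowerSeries.X : Ah) ^ k ∣
          PowerSeries.coeff (R := Ah) n ((1 - PowerSeries.X) ^ m * gser g))
    ∧
    -- the inverse exists and has the stated form
    ∃ G : ℕ → Ah, (∀ s, (PowerSeries.X : Ah) ^ s ∣ G s) ∧ G 0 = 1 ∧
      gser g * invser G = 1 := by
  refine ⟨fun k => ⟨k, k, fun n => pow_dvd_coeff_one_sub_X_pow_mul_gser hg⟩, ?_⟩
  obtain ⟨ψ, hψ, hψ0, hmul⟩ :=
    exists_mul_eq_one_of_pow_dvd_coeff (X : Ah) (φ := mk g) (by simpa using hg) (by simpa using hg0)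
  have hψ_coeff : mk (coeff · ψ) = ψ := by ext; rw [coeff_mk]
  exact ⟨(coeff · ψ), hψ, hψ0, gser_mul_invser (by rwa [hψ_coeff])⟩
end
end

section
/- (Polynomial truncation of g against a power of (z₁−z₂): Lemma 3.2, existence part for a single coefficient.) Let \(F(x) = \sum_{s=0}^{\infty} F_s\, \frac{x^{s+\delta}}{(1-x)^{s+1}}\) with \(F_s \in h^s\mathbb{C}[[h]]\) and δ ∈ {0,1}. Then for any integers a₁, a₂, k > 0 and any α ∈ C, there exists an integer p ≥ 0 such that all coefficients of the monomials \(u_1^{a_1'}u_2^{a_2'}h^{k'}\) with \(0 \le a_1' < a_1\), \(0 \le a_2' < a_2\), \(0 \le k' < k\) in the series \((z_1-z_2)^p\, F(z_1 e^{u_1-u_2+\alpha h}/z_2)\) belong to \(\mathbb{C}[z_1, z_2^{\pm1}]\). -/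
/-!
STATEMENT 16 (Lemma 3.2, polynomial truncation against a power of `z₁ - z₂`):
let `F(x) = Σ_{s≥0} F_s x^{s+δ}/(1-x)^{s+1}` with `F_s ∈ h^s ℂ[[h]]`,
`δ ∈ {0,1}`.  For any `a₁, a₂, k > 0` and `α ∈ ℂ` there exists `p ≥ 0` such
that the coefficients of all monomials `u₁^{a₁'} u₂^{a₂'} h^{k'}`
(`a₁' < a₁`, `a₂' < a₂`, `k' < k`) in `(z₁-z₂)^p F(z₁ e^{u₁-u₂+αh}/z₂)`
lie in `ℂ[z₁, z₂^{±1}]`.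

We write `t = z₁/z₂`, so that `(z₁-z₂)^p = z₂^p (t-1)^p` and "lies in
`ℂ[z₁, z₂^{±1}]`" means "is a polynomial in `t`".  Everything lives in
`ℂ[[t, u₁, u₂, h]] = MvPowerSeries (Fin 4) ℂ` (variables `0 = t`, `1 = u₁`,
`2 = u₂`, `3 = h`):

* `E = e^{u₁-u₂+αh}`, with coefficient `(-1)^b α^c/(a! b! c!)` at `u₁^a u₂^b h^c`;
* `x = t·E`; `(1-x)⁻¹ = Σ_m x^m` (the sum converges t-adically);
* `F(tE) = Σ_s F_s (tE)^{s+δ} (1-tE)^{-(s+1)}` (the sum converges h-adically).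

The conclusion states that the coefficient of each monomial
`u₁^{a₁'} u₂^{a₂'} h^{k'}` in `(t-1)^p F(tE)` has only finitely many nonzero
`t`-coefficients, i.e. is a polynomial in `t`.
-/

noncomputable section

/-- The exponent monomial `t^m u₁^a u₂^b h^c`. -/
def idx (m a b c : ℕ) : Fin 4 →₀ ℕ :=
  Finsupp.single 0 m + Finsupp.single 1 a + Finsupp.single 2 b + Finsupp.single 3 c

/-- `E = e^{u₁ - u₂ + α h} ∈ ℂ[[u₁,u₂,h]]`. -/
def expE (α : ℂ) : MvPowerSeries (Fin 4) ℂ :=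
  fun d => if d 0 = 0 then
    ((-1 : ℂ) ^ (d 2) * α ^ (d 3)) /
      ((Nat.factorial (d 1) : ℂ) * (Nat.factorial (d 2) : ℂ) * (Nat.factorial (d 3) : ℂ))
  else 0

/-- The embedding `ℂ[[h]] → ℂ[[t,u₁,u₂,h]]`. -/
def embedH (φ : PowerSeries ℂ) : MvPowerSeries (Fin 4) ℂ :=
  fun d => if d 0 = 0 ∧ d 1 = 0 ∧ d 2 = 0 then PowerSeries.coeff (d 3) φ else 0

/-- `x = t·E = (z₁/z₂) e^{u₁-u₂+αh}`. -/
def xsub (α : ℂ) : MvPowerSeries (Fin 4) ℂ := MvPowerSeries.X 0 * expE α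

/-- `(1 - tE)⁻¹ = Σ_m (tE)^m`, assembled coefficientwise (each monomial of
`(tE)^m` has `t`-exponent `m`, so the sum is t-adically convergent). -/
def geomE (α : ℂ) : MvPowerSeries (Fin 4) ℂ :=
  fun d => ∑ m ∈ Finset.range (d 0 + 1), MvPowerSeries.coeff d (xsub α ^ m)

/-- `F(tE) = Σ_s F_s (tE)^{s+δ} (1-tE)^{-(s+1)}`, assembled coefficientwise
(the term of index `s` is divisible by `h^s`, so the sum is h-adically
convergent). -/
def Fsub (Fs : ℕ → PowerSeries ℂ) (δ : ℕ) (α : ℂ) : MvPowerSeries (Fin 4) ℂ :=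
  fun d => ∑ s ∈ Finset.range (d 3 + 1),
    MvPowerSeries.coeff d (embedH (Fs s) * xsub α ^ (s + δ) * geomE α ^ (s + 1))


/-! Put `t = X 0`. The series that, modulo high powers of `u₁, u₂, h`, become polynomials in `t`
after multiplication by some power of `t - 1` form a subsemiring, which contains every series of
bounded `t`-degree. It also contains `(1 - tE)⁻¹`: along a ray `e + n • t` its coefficients are
`n ↦ coeff e (E ^ n)`, whose `(|e| + 1)`-st forward difference is
`coeff e (E ^ n (E - 1) ^ (|e| + 1)) = 0` because `E(0) = 1`, while multiplication by `t - 1` acts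
along the ray as a negated forward difference. Hence every summand of `F(tE)` lies in the
subsemiring; and since `h^s ∣ F_s`, in `h`-degree below `k` the series `F(tE)` agrees with the sum
of its first `k` summands. -/

open MvPowerSeries Finset Finsupp
open scoped fwdDiff

theorem fwdDiff_iter_comp_addMonoidHomClass {M G G' F : Type*} [AddCommMonoid M]
    [AddCommGroup G] [AddCommGroup G'] [FunLike F G G'] [AddMonoidHomClass F G G'] (φ : F)
    (h : M) (f : M → G) (n : ℕ) :
    (Δ_[h])^[n] (fun x => φ (f x)) = fun x => φ ((Δ_[h])^[n] f x) := by
  induction n with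
  | zero => rfl
  | succ n ih =>
    ext x
    simp [Function.iterate_succ_apply', ih, fwdDiff]

theorem fwdDiff_iter_pow {A : Type*} [CommRing A] (a : A) (j n : ℕ) :
    (Δ_[1])^[j] (fun n : ℕ => a ^ n) n = a ^ n * (a - 1) ^ j := by
  induction j generalizing n with
  | zero => simp
  | succ j ih =>
    rw [Function.iterate_succ_apply', fwdDiff, ih, ih]
    ring

namespace MvPowerSeries

variable {σ R : Type*} [CommRing R]

theorem coeff_add_single_X_sub_one_mul (i : σ) (d : σ →₀ ℕ) (G : MvPowerSeries σ R) :
    coeff (d + single i 1) ((X i - 1) * G) = coeff d G - coeff (d + single i 1) G := by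
  rw [sub_mul, one_mul, map_sub, X, add_comm d, coeff_add_monomial_mul, one_mul]

theorem coeff_add_single_X_sub_one_pow_mul (i : σ) (d : σ →₀ ℕ) (G : MvPowerSeries σ R)
    (p n : ℕ) :
    coeff (d + single i (n + p)) ((X i - 1) ^ p * G)
      = (-1) ^ p * (Δ_[1])^[p] (fun n => coeff (d + single i n) G) n := by
  induction p generalizing n with
  | zero => simp
  | succ p ih =>
    rw [pow_succ', mul_assoc, ← add_assoc n p 1, single_add, ← add_assoc,
      coeff_add_single_X_sub_one_mul, add_assoc, ← single_add, add_right_comm n p 1, ih, ih,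
      Function.iterate_succ_apply', fwdDiff]
    ring

theorem coeff_mul_congr_right {A G G' : MvPowerSeries σ R} {d : σ →₀ ℕ}
    (h : ∀ e ≤ d, coeff e G = coeff e G') : coeff d (A * G) = coeff d (A * G') := by
  classical
  refine sum_congr rfl fun x hx => ?_
  rw [h x.2 (mem_antidiagonal.mp hx ▸ le_add_self)]

theorem fwdDiff_iter_coeff_pow_eq_zero {E : MvPowerSeries σ R} (hE : constantCoeff E = 1)
    {e : σ →₀ ℕ} {D : ℕ} (he : e.degree < D) :
    (Δ_[1])^[D] (fun n => coeff e (E ^ n)) = 0 := by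
  ext n
  rw [fwdDiff_iter_comp_addMonoidHomClass (coeff e), Pi.zero_apply]
  change coeff e ((Δ_[1])^[D] (fun n : ℕ => E ^ n) n) = 0
  rw [fwdDiff_iter_pow]
  refine coeff_of_lt_order ?_
  calc (e.degree : ℕ∞) < D := by exact_mod_cast he
    _ ≤ ((E - 1) ^ D).order :=
      le_order_pow_of_constantCoeff_eq_zero D (by rw [map_sub, hE, map_one, sub_self])
    _ ≤ (E ^ n).order + ((E - 1) ^ D).order := le_add_self
    _ ≤ (E ^ n * (E - 1) ^ D).order := le_order_mul

/-- `G` has degree at most `N` in `X i` once all monomials of degree `> K` in the other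
variables are discarded. -/
def DegreeInLE (i : σ) (K N : ℕ) (G : MvPowerSeries σ R) : Prop :=
  ∀ d : σ →₀ ℕ, (d.erase i).degree ≤ K → N < d i → coeff d G = 0

namespace DegreeInLE

variable {i : σ} {K N N' : ℕ} {G H : MvPowerSeries σ R}

theorem mono (hG : DegreeInLE i K N G) (hN : N ≤ N') : DegreeInLE i K N' G :=
  fun d hd hdi => hG d hd (by omega)

theorem add (hG : DegreeInLE i K N G) (hH : DegreeInLE i K N H) : DegreeInLE i K N (G + H) :=
  fun d hd hdi => by rw [map_add, hG d hd hdi, hH d hd hdi, add_zero]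

theorem one : DegreeInLE i K 0 (1 : MvPowerSeries σ R) := by
  classical
  intro d _ hdi
  rw [coeff_one, if_neg]
  rintro rfl
  simp at hdi

theorem mul (hG : DegreeInLE i K N G) (hH : DegreeInLE i K N' H) :
    DegreeInLE i K (N + N') (G * H) := by
  classical
  intro d hd hdi
  refine sum_eq_zero fun x hx => ?_
  have hsum : x.1 + x.2 = d := mem_antidiagonal.mp hx
  have herase : (x.1.erase i).degree + (x.2.erase i).degree = (d.erase i).degree := by
    rw [← map_add, ← erase_add, hsum]
  have hi : x.1 i + x.2 i = d i := by rw [← hsum, Finsupp.add_apply]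
  rcases lt_or_ge N (x.1 i) with h | h
  · rw [hG x.1 (by omega) h, zero_mul]
  · rw [hH x.2 (by omega) (by omega), mul_zero]

theorem pow (hG : DegreeInLE i K N G) (n : ℕ) : DegreeInLE i K (n * N) (G ^ n) := by
  induction n with
  | zero => simpa using one
  | succ n ih => simpa [pow_succ, add_mul] using ih.mul hG

theorem X_sub_one_mul (hG : DegreeInLE i K N G) : DegreeInLE i K (N + 1) ((X i - 1) * G) := by
  intro d hd hdi
  obtain ⟨n, hn⟩ : ∃ n, d i = n + 1 := ⟨d i - 1, by omega⟩
  have hd' : d = (d.erase i + single i n) + single i 1 := by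
    rw [add_assoc, ← single_add, ← hn, erase_add_single]
  have hray : ∀ m, ((d.erase i + single i m).erase i).degree ≤ K := fun m => by
    simpa [erase_add, erase_single] using hd
  rw [hd', coeff_add_single_X_sub_one_mul, hG _ (hray n) (by simp; omega), add_assoc,
    ← single_add, hG _ (hray (n + 1)) (by simp; omega), sub_zero]

theorem X_sub_one_pow_mul (hG : DegreeInLE i K N G) (p : ℕ) :
    DegreeInLE i K (N + p) ((X i - 1) ^ p * G) := by
  induction p with
  | zero => simpa using hG
  | succ p ih => simpa [pow_succ', mul_assoc, ← add_assoc] using ih.X_sub_one_mul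

end DegreeInLE

theorem degreeInLE_X (i : σ) (K : ℕ) : DegreeInLE i K 1 (X i : MvPowerSeries σ R) := by
  classical
  intro d _ hdi
  rw [coeff_X, if_neg]
  rintro rfl
  simp at hdi

def polynomialTruncation (i : σ) : Subsemiring (MvPowerSeries σ R) where
  carrier := {G | ∀ K, ∃ p N, DegreeInLE i K N ((X i - 1) ^ p * G)}
  zero_mem' K := ⟨0, 0, fun d _ _ => by rw [mul_zero, map_zero]⟩
  one_mem' K := ⟨0, 0, by simpa using DegreeInLE.one⟩
  add_mem' {G H} hG hH K := by
    obtain ⟨p, N, hp⟩ := hG K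
    obtain ⟨q, N', hq⟩ := hH K
    refine ⟨p + q, N + N' + p + q, ?_⟩
    have hsplit : (X i - 1) ^ (p + q) * (G + H)
        = (X i - 1) ^ q * ((X i - 1) ^ p * G) + (X i - 1) ^ p * ((X i - 1) ^ q * H) := by ring
    rw [hsplit]
    exact ((hp.X_sub_one_pow_mul q).mono (by omega)).add
      ((hq.X_sub_one_pow_mul p).mono (by omega))
  mul_mem' {G H} hG hH K := by
    obtain ⟨p, N, hp⟩ := hG K
    obtain ⟨q, N', hq⟩ := hH K
    refine ⟨p + q, N + N', ?_⟩
    have hsplit : (X i - 1) ^ (p + q) * (G * H) = ((X i - 1) ^ p * G) * ((X i - 1) ^ q * H) := by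
      ring
    rw [hsplit]
    exact hp.mul hq

variable {i : σ} {G : MvPowerSeries σ R}

theorem mem_polynomialTruncation_of_degreeInLE (h : ∀ K, ∃ N, DegreeInLE i K N G) :
    G ∈ polynomialTruncation i := fun K => by
  obtain ⟨N, hN⟩ := h K
  exact ⟨0, N, by simpa using hN⟩

theorem mem_polynomialTruncation_of_fwdDiff_iter
    (h : ∀ K, ∃ D, ∀ e : σ →₀ ℕ, e i = 0 → e.degree ≤ K →
      (Δ_[1])^[D] (fun n => coeff (e + single i n) G) = 0) :
    G ∈ polynomialTruncation i := fun K => by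
  obtain ⟨D, hD⟩ := h K
  refine ⟨D, D, fun d hd hdi => ?_⟩
  have hd' : d = d.erase i + single i (d i - D + D) := by
    rw [Nat.sub_add_cancel hdi.le, erase_add_single]
  rw [hd', coeff_add_single_X_sub_one_pow_mul, hD _ erase_same hd, Pi.zero_apply, mul_zero]

end MvPowerSeries

theorem constantCoeff_expE (α : ℂ) : constantCoeff (expE α) = 1 := by
  rw [← coeff_zero_eq_constantCoeff_apply, coeff_apply]
  simp [expE]

theorem degreeInLE_expE (α : ℂ) (K : ℕ) : DegreeInLE 0 K 0 (expE α) := fun d _ hd => by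
  rw [coeff_apply]
  simp [expE, hd.ne']

theorem degreeInLE_embedH (φ : PowerSeries ℂ) (K : ℕ) : DegreeInLE 0 K 0 (embedH φ) :=
  fun d _ hd => by
    rw [coeff_apply]
    simp [embedH, hd.ne']

theorem coeff_embedH_eq_zero {φ : PowerSeries ℂ} {s : ℕ} (hφ : PowerSeries.X ^ s ∣ φ)
    {d : Fin 4 →₀ ℕ} (hd : d 3 < s) : coeff d (embedH φ) = 0 := by
  rw [coeff_apply]
  simp [embedH, PowerSeries.X_pow_dvd_iff.mp hφ _ hd]

theorem coeff_geomE (α : ℂ) {e : Fin 4 →₀ ℕ} (he : e 0 = 0) (n : ℕ) :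
    coeff (e + single 0 n) (geomE α) = coeff e (expE α ^ n) := by
  have hxsub : ∀ m ≤ n,
      coeff (e + single 0 n) (xsub α ^ m) = coeff (e + single 0 (n - m)) (expE α ^ m) := by
    intro m hm
    have hsplit : e + single 0 n = single 0 m + (e + single 0 (n - m)) := by
      rw [add_left_comm, ← single_add, Nat.add_sub_cancel' hm]
    rw [xsub, mul_pow, X_pow_eq, hsplit, coeff_add_monomial_mul, one_mul]
  rw [coeff_apply]
  simp only [geomE, Finsupp.add_apply, he, single_eq_same, zero_add]
  rw [sum_eq_single_of_mem n (self_mem_range_succ n), hxsub n le_rfl, Nat.sub_self,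
    single_zero, add_zero]
  intro m hm hmn
  have hmn' : m < n := by
    have := mem_range.mp hm
    omega
  rw [hxsub m hmn'.le]
  refine ((degreeInLE_expE α e.degree).pow m) _ (le_of_eq ?_) ?_
  · rw [erase_add, erase_single, add_zero, erase_of_notMem_support (notMem_support_iff.mpr he)]
  · simp only [Finsupp.add_apply, he, single_eq_same]
    omega

theorem geomE_mem_polynomialTruncation (α : ℂ) : geomE α ∈ polynomialTruncation 0 :=
  mem_polynomialTruncation_of_fwdDiff_iter fun K => ⟨K + 1, fun e he hdeg => by
    simp only [coeff_geomE α he]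
    exact fwdDiff_iter_coeff_pow_eq_zero (constantCoeff_expE α) (by omega)⟩

theorem xsub_mem_polynomialTruncation (α : ℂ) : xsub α ∈ polynomialTruncation 0 :=
  mul_mem (mem_polynomialTruncation_of_degreeInLE fun K => ⟨1, degreeInLE_X 0 K⟩)
    (mem_polynomialTruncation_of_degreeInLE fun K => ⟨0, degreeInLE_expE α K⟩)

def Fterm (Fs : ℕ → PowerSeries ℂ) (δ : ℕ) (α : ℂ) (s : ℕ) : MvPowerSeries (Fin 4) ℂ :=
  embedH (Fs s) * xsub α ^ (s + δ) * geomE α ^ (s + 1)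

theorem Fterm_mem_polynomialTruncation (Fs : ℕ → PowerSeries ℂ) (δ : ℕ) (α : ℂ) (s : ℕ) :
    Fterm Fs δ α s ∈ polynomialTruncation 0 :=
  mul_mem (mul_mem (mem_polynomialTruncation_of_degreeInLE fun K => ⟨0, degreeInLE_embedH _ K⟩)
    (pow_mem (xsub_mem_polynomialTruncation α) _)) (pow_mem (geomE_mem_polynomialTruncation α) _)

theorem coeff_Fterm_eq_zero {Fs : ℕ → PowerSeries ℂ} {s : ℕ} (hFs : PowerSeries.X ^ s ∣ Fs s)
    (δ : ℕ) (α : ℂ) {d : Fin 4 →₀ ℕ} (hd : d 3 < s) : coeff d (Fterm Fs δ α s) = 0 := by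
  have hembed : ∀ e ≤ d, coeff e (embedH (Fs s)) = coeff e 0 := fun e he => by
    rw [map_zero]
    exact coeff_embedH_eq_zero hFs (lt_of_le_of_lt (he 3) hd)
  rw [Fterm, mul_assoc, mul_comm, coeff_mul_congr_right hembed, mul_zero, map_zero]

theorem coeff_Fsub_eq_coeff_sum_Fterm {Fs : ℕ → PowerSeries ℂ}
    (hFs : ∀ s, (PowerSeries.X : PowerSeries ℂ) ^ s ∣ Fs s) (δ : ℕ) (α : ℂ) {k : ℕ}
    {d : Fin 4 →₀ ℕ} (hd : d 3 < k) :
    coeff d (Fsub Fs δ α) = coeff d (∑ s ∈ range k, Fterm Fs δ α s) := by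
  rw [coeff_apply, map_sum]
  refine sum_subset (range_subset_range.mpr hd) fun s _ hs => ?_
  exact coeff_Fterm_eq_zero (hFs s) δ α (by simpa using hs)

theorem degree_erase_zero_idx (m a b c : ℕ) : ((idx m a b c).erase 0).degree = a + b + c := by
  simp [degree_eq_sum, Fin.sum_univ_four, idx]

theorem polynomial_truncation_general (Fs : ℕ → PowerSeries ℂ)
    (hFs : ∀ s, (PowerSeries.X : PowerSeries ℂ) ^ s ∣ Fs s)
    (δ : ℕ) (α : ℂ)
    (a₁ a₂ k : ℕ) :
    ∃ p : ℕ, ∀ a₁' < a₁, ∀ a₂' < a₂, ∀ k' < k,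
      ∃ dmax : ℕ, ∀ m : ℕ, dmax < m →
        MvPowerSeries.coeff (idx m a₁' a₂' k')
          ((MvPowerSeries.X 0 - 1) ^ p * Fsub Fs δ α) = 0 := by
  obtain ⟨p, N, hN⟩ := sum_mem (t := range k)
    (fun s _ => Fterm_mem_polynomialTruncation Fs δ α s) (a₁ + a₂ + k)
  refine ⟨p, fun a ha b hb c hc => ⟨N, fun m hm => ?_⟩⟩
  have hFsub : ∀ e ≤ idx m a b c,
      coeff e (Fsub Fs δ α) = coeff e (∑ s ∈ range k, Fterm Fs δ α s) := fun e he =>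
    coeff_Fsub_eq_coeff_sum_Fterm hFs δ α (lt_of_le_of_lt (he 3) (by simpa [idx]))
  rw [coeff_mul_congr_right hFsub]
  exact hN _ (by rw [degree_erase_zero_idx]; omega) (by simpa [idx])

theorem polynomial_truncation (Fs : ℕ → PowerSeries ℂ)
    (hFs : ∀ s, (PowerSeries.X : PowerSeries ℂ) ^ s ∣ Fs s)
    (δ : ℕ) (hδ : δ ≤ 1) (α : ℂ)
    (a₁ a₂ k : ℕ) (ha₁ : 0 < a₁) (ha₂ : 0 < a₂) (hk : 0 < k) :
    ∃ p : ℕ, ∀ a₁' < a₁, ∀ a₂' < a₂, ∀ k' < k,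
      ∃ dmax : ℕ, ∀ m : ℕ, dmax < m →
        MvPowerSeries.coeff (idx m a₁' a₂' k')
          ((MvPowerSeries.X 0 - 1) ^ p * Fsub Fs δ α) = 0 :=
  polynomial_truncation_general Fs hFs δ α a₁ a₂ k
end
end
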